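/- arXiv:1009.4886 — 2 statements merged into one kernel-verified Lean document; each statement's English description precedes it below -/
import Mathlib

section
/- Let X be a real-valued Lévy process, t ≥ 0, and p > 0. If E e^{pM_t} < ∞, then sup_{0<δ≤1} E e^{pM^δ_t} < ∞. -/
/-!
The remainder `R^δ = X - X^δ` is independent of `X^δ`, and for `δ ≤ 1`, `s ≤ t` the exponent
of `R^δ_s` is bounded by `2 t V u²` with `V = ∫_{|x| ≤ 1} x² dν`; the truncation inequality for
characteristic functions therefore gives one `K` with `P(R^δ_s ≥ -K) ≥ 1/2` for all such `δ, s`.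
On a finite grid, let `τ` be the first time at which `X^δ` attains its maximum. The event
`{τ = s}` depends on `X^δ` only, and on `{τ = s, R^δ_s ≥ -K}` we have
`M_t ≥ X_s ≥ max X^δ - K`; summing over `s` gives `E e^{p max X^δ} ≤ 2 e^{pK} E e^{p M_t}`.
Right-continuity of `X^δ` lets the grid exhaust `[0, t]` by monotone convergence.
-/

open MeasureTheory ProbabilityTheory Filter Asymptotics

noncomputable section

namespace LevyApprox

variable {Ω : Type*} [MeasurableSpace Ω]

/-- A càdlàg process started at `0` with stationary and independent increments,
i.e. a Lévy process. -/
structure IsLevyProcess (P : Measure Ω) (X : ℝ → Ω → ℝ) : Prop where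
  meas : ∀ t : ℝ, Measurable (X t)
  init : ∀ᵐ ω ∂P, X 0 ω = 0
  rightCont : ∀ᵐ ω ∂P, ∀ t : ℝ, 0 ≤ t →
    ContinuousWithinAt (fun s => X s ω) (Set.Ici t) t
  leftLim : ∀ᵐ ω ∂P, ∀ t : ℝ, 0 < t →
    ∃ l : ℝ, Tendsto (fun s => X s ω) (nhdsWithin t (Set.Iio t)) (nhds l)
  stationary : ∀ s t : ℝ, 0 ≤ s → s ≤ t →
    Measure.map (fun ω => X t ω - X s ω) P = Measure.map (fun ω => X (t - s) ω) P
  indepIncr : ∀ s t : ℝ, 0 ≤ s → s ≤ t →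
    IndepFun (fun ω => X t ω - X s ω) (fun ω => fun u : Set.Icc (0:ℝ) s => X (u : ℝ) ω) P

/-- `ν` is a Lévy measure on `ℝ`: no atom at `0` and `∫ min(x², 1) ν(dx) < ∞`. -/
structure IsLevyMeasure (ν : Measure ℝ) : Prop where
  noAtom : ν {0} = 0
  finiteMin : ∫⁻ x : ℝ, ENNReal.ofReal (min (x ^ 2) 1) ∂ν < ⊤

/-- The characteristic (Lévy) exponent of the generating triplet `(γ, b², ν)`. -/
def levyExponent (γ b : ℝ) (ν : Measure ℝ) (u : ℝ) : ℂ :=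
  ((γ * u : ℝ) : ℂ) * Complex.I - ((b ^ 2 * u ^ 2 / 2 : ℝ) : ℂ) +
    ∫ x : ℝ, (Complex.exp (Complex.I * ((u * x : ℝ) : ℂ)) - 1 -
      (if |x| ≤ 1 then ((u * x : ℝ) : ℂ) * Complex.I else 0)) ∂ν

/-- The characteristic exponent of `X^ε`, obtained from `X` by removing the
compensated jumps of absolute size at most `ε`. -/
def truncExponent (γ b : ℝ) (ν : Measure ℝ) (ε : ℝ) (u : ℝ) : ℂ :=
  ((γ * u : ℝ) : ℂ) * Complex.I - ((b ^ 2 * u ^ 2 / 2 : ℝ) : ℂ) +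
    ∫ x : ℝ in {x : ℝ | ε < |x|}, (Complex.exp (Complex.I * ((u * x : ℝ) : ℂ)) - 1 -
      (if |x| ≤ 1 then ((u * x : ℝ) : ℂ) * Complex.I else 0)) ∂ν

/-- The characteristic exponent of `R^ε = X - X^ε`, the compensated sum of
jumps of absolute size at most `ε`. -/
def smallExponent (ν : Measure ℝ) (ε : ℝ) (u : ℝ) : ℂ :=
  ∫ x : ℝ in {x : ℝ | |x| ≤ ε}, (Complex.exp (Complex.I * ((u * x : ℝ) : ℂ)) - 1 -
    ((u * x : ℝ) : ℂ) * Complex.I) ∂ν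

/-- The process `X` has characteristic exponent `ψ` under `P`:
`E[exp(i u X_t)] = exp(t ψ(u))` for all `t ≥ 0`. -/
def HasCharExponent (P : Measure Ω) (X : ℝ → Ω → ℝ) (ψ : ℝ → ℂ) : Prop :=
  ∀ t : ℝ, 0 ≤ t → ∀ u : ℝ,
    ∫ ω, Complex.exp (Complex.I * ((u * X t ω : ℝ) : ℂ)) ∂P = Complex.exp ((t : ℂ) * ψ u)

/-- `σ(ε) = (∫_{|x| ≤ ε} x² ν(dx))^{1/2}`. -/
def sigmaFn (ν : Measure ℝ) (ε : ℝ) : ℝ :=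
  Real.sqrt (∫ x : ℝ in {x : ℝ | |x| ≤ ε}, x ^ 2 ∂ν)

/-- `σ₀(ε) = max (σ(ε), ε)`. -/
def sigma0 (ν : Measure ℝ) (ε : ℝ) : ℝ := max (sigmaFn ν ε) ε

/-- The running supremum `M_t = sup_{0 ≤ s ≤ t} X_s`. -/
def runSup (X : ℝ → Ω → ℝ) (t : ℝ) (ω : Ω) : ℝ :=
  ⨆ s : Set.Icc (0:ℝ) t, X (s : ℝ) ω

/-- A standard Brownian motion: continuous paths started at `0`, Gaussian
stationary increments independent of the past. -/
structure IsStdBrownian (P : Measure Ω) (W : ℝ → Ω → ℝ) : Prop where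
  meas : ∀ t : ℝ, Measurable (W t)
  init : ∀ᵐ ω ∂P, W 0 ω = 0
  cont : ∀ᵐ ω ∂P, Continuous fun t => W t ω
  gauss : ∀ s t : ℝ, 0 ≤ s → s ≤ t →
    Measure.map (fun ω => W t ω - W s ω) P = gaussianReal 0 (Real.toNNReal (t - s))
  indepIncr : ∀ s t : ℝ, 0 ≤ s → s ≤ t →
    IndepFun (fun ω => W t ω - W s ω) (fun ω => fun u : Set.Icc (0:ℝ) s => W (u : ℝ) ω) P

/-- `β(ε) = σ₀(ε)⁻⁴ ∫_{|x| ≤ ε} x⁴ ν(dx)`. -/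
def betaFn (ν : Measure ℝ) (ε : ℝ) : ℝ :=
  (∫ x : ℝ in {x : ℝ | |x| ≤ ε}, x ^ 4 ∂ν) / sigma0 ν ε ^ 4

/-- `β₁ᵗ(ε) = β(ε)^{1/6} (√(log(t/β(ε)^{1/3} + 3)) + 1)`. -/
def beta1 (ν : Measure ℝ) (t ε : ℝ) : ℝ :=
  betaFn ν ε ^ ((1 : ℝ)/6) *
    (Real.sqrt (Real.log (t / betaFn ν ε ^ ((1 : ℝ)/3) + 3)) + 1)

/-- `β_{p,θ}ᵗ(ε) = β(ε)^{pθ/(p+4θ)} [(log(t/β(ε)^{pθ/(p+4θ)} + 3))^p + 1]`. -/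
def betaP (ν : Measure ℝ) (t p θ ε : ℝ) : ℝ :=
  betaFn ν ε ^ (p * θ / (p + 4 * θ)) *
    ((Real.log (t / betaFn ν ε ^ (p * θ / (p + 4 * θ)) + 3)) ^ p + 1)

/-- `ρ(ε) = σ(ε)⁻³ ∫_{|x| ≤ ε} |x|³ ν(dx)`. -/
def rhoFn (ν : Measure ℝ) (ε : ℝ) : ℝ :=
  (∫ x : ℝ in {x : ℝ | |x| ≤ ε}, |x| ^ 3 ∂ν) / sigmaFn ν ε ^ 3

open scoped ENNReal Topology

open Complex in
lemma norm_cexp_I_mul_sub_one_sub_le (θ : ℝ) :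
    ‖cexp (I * θ) - 1 - θ * I‖ ≤ 2 * θ ^ 2 := by
  have hθI : ‖(θ : ℂ) * I‖ = |θ| := by simp
  rcases le_or_gt |θ| 1 with hθ | hθ
  · calc ‖cexp (I * θ) - 1 - θ * I‖ = ‖cexp (θ * I) - 1 - θ * I‖ := by rw [mul_comm]
      _ ≤ ‖(θ : ℂ) * I‖ ^ 2 := norm_exp_sub_one_sub_id_le (hθI ▸ hθ)
      _ ≤ 2 * θ ^ 2 := by rw [hθI, sq_abs]; nlinarith [sq_nonneg θ]
  · calc ‖cexp (I * θ) - 1 - θ * I‖ ≤ ‖cexp (I * θ) - 1‖ + ‖(θ : ℂ) * I‖ := norm_sub_le _ _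
      _ ≤ |θ| + |θ| := by
          rw [hθI]
          gcongr
          exact Real.norm_eq_abs θ ▸ Real.norm_exp_I_mul_ofReal_sub_one_le
      _ ≤ 2 * θ ^ 2 := by nlinarith [sq_abs θ]

lemma IsLevyMeasure.integrableOn_sq {ν : Measure ℝ} (hν : IsLevyMeasure ν) :
    IntegrableOn (fun x : ℝ => x ^ 2) {x : ℝ | |x| ≤ 1} ν := by
  refine ⟨by fun_prop, ?_⟩
  rw [hasFiniteIntegral_iff_ofReal (ae_of_all _ fun x => sq_nonneg x)]
  calc ∫⁻ x in {x : ℝ | |x| ≤ 1}, ENNReal.ofReal (x ^ 2) ∂ν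
      = ∫⁻ x in {x : ℝ | |x| ≤ 1}, ENNReal.ofReal (min (x ^ 2) 1) ∂ν := by
        refine setLIntegral_congr_fun (measurableSet_le measurable_abs measurable_const)
          fun x hx => ?_
        rw [min_eq_left ((sq_le_one_iff_abs_le_one x).mpr hx)]
    _ ≤ ∫⁻ x, ENNReal.ofReal (min (x ^ 2) 1) ∂ν := setLIntegral_le_lintegral _ _
    _ < ⊤ := hν.finiteMin

lemma norm_smallExponent_le {ν : Measure ℝ} (hν : IsLevyMeasure ν) {δ : ℝ} (hδ : δ ≤ 1)
    (u : ℝ) :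
    ‖smallExponent ν δ u‖ ≤ 2 * (∫ x in {x : ℝ | |x| ≤ 1}, x ^ 2 ∂ν) * u ^ 2 := by
  have hsub : {x : ℝ | |x| ≤ δ} ⊆ {x : ℝ | |x| ≤ 1} := fun x hx => le_trans hx hδ
  have hbound : IntegrableOn (fun x : ℝ => 2 * u ^ 2 * x ^ 2) {x : ℝ | |x| ≤ δ} ν :=
    (hν.integrableOn_sq.mono_set hsub).const_mul _
  calc ‖smallExponent ν δ u‖
      ≤ ∫ x in {x : ℝ | |x| ≤ δ}, 2 * u ^ 2 * x ^ 2 ∂ν := by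
        refine norm_integral_le_of_norm_le hbound (ae_of_all _ fun x => ?_)
        simpa [mul_pow, mul_assoc] using norm_cexp_I_mul_sub_one_sub_le (u * x)
    _ = 2 * u ^ 2 * ∫ x in {x : ℝ | |x| ≤ δ}, x ^ 2 ∂ν := integral_const_mul _ _
    _ ≤ 2 * u ^ 2 * ∫ x in {x : ℝ | |x| ≤ 1}, x ^ 2 ∂ν := by
        refine mul_le_mul_of_nonneg_left ?_ (by positivity)
        exact setIntegral_mono_set hν.integrableOn_sq (ae_of_all _ fun x => sq_nonneg x)
          hsub.eventuallyLE
    _ = _ := by ring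

lemma measureReal_abs_gt_le_of_norm_one_sub_charFun_le {μ : Measure ℝ} [IsProbabilityMeasure μ]
    {r C : ℝ} (hr : 0 < r) (h : ∀ u, |u| ≤ 2 * r⁻¹ → ‖1 - charFun μ u‖ ≤ C * u ^ 2) :
    μ.real {x | r < |x|} ≤ 8 * C / (3 * r ^ 2) := by
  have hint : ‖∫ u in (-2 * r⁻¹)..(2 * r⁻¹), 1 - charFun μ u‖ ≤ C * (16 / (3 * r ^ 3)) := by
    calc ‖∫ u in (-2 * r⁻¹)..(2 * r⁻¹), 1 - charFun μ u‖
        ≤ ∫ u in (-2 * r⁻¹)..(2 * r⁻¹), C * u ^ 2 := by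
          refine intervalIntegral.norm_integral_le_of_norm_le (by linarith [inv_pos.mpr hr])
            (ae_of_all _ ?_) ((continuous_const.mul (continuous_pow 2)).intervalIntegrable _ _)
          intro u hu
          exact h u (abs_le.mpr ⟨by linarith [hu.1], hu.2⟩)
      _ = C * (16 / (3 * r ^ 3)) := by
          rw [intervalIntegral.integral_const_mul, integral_pow]
          field_simp
          ring_nf
          rw [mul_assoc C, ← mul_pow, mul_inv_cancel₀ hr.ne', one_pow, mul_one]
  calc μ.real {x | r < |x|} ≤ 2⁻¹ * r * ‖∫ u in (-2 * r⁻¹)..(2 * r⁻¹), 1 - charFun μ u‖ :=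
        measureReal_abs_gt_le_integral_charFun hr
    _ ≤ 2⁻¹ * r * (C * (16 / (3 * r ^ 3))) := by gcongr
    _ = 8 * C / (3 * r ^ 2) := by field_simp; ring

lemma measureReal_abs_gt_le_half_of_charFun_eq_cexp {μ : Measure ℝ} [IsProbabilityMeasure μ]
    {φ : ℝ → ℂ} {c r : ℝ} (hr : 0 < r) (hcr : 32 * c ≤ 3 * r ^ 2)
    (hμ : ∀ u, charFun μ u = Complex.exp (φ u)) (hφ : ∀ u, ‖φ u‖ ≤ c * u ^ 2) :
    μ.real {x | r < |x|} ≤ 2⁻¹ := by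
  have hc0 : 0 ≤ c := by simpa using (norm_nonneg _).trans (hφ 1)
  have hc : ∀ u, |u| ≤ 2 * r⁻¹ → ‖1 - charFun μ u‖ ≤ 2 * c * u ^ 2 := by
    intro u hu
    have hu2 : c * u ^ 2 ≤ 1 := by
      have hur : |u * r| ≤ 2 := by
        rw [abs_mul, abs_of_pos hr, ← le_div_iff₀ hr, div_eq_mul_inv]
        exact hu
      nlinarith [sq_abs (u * r), abs_nonneg (u * r)]
    rw [hμ, norm_sub_rev]
    calc ‖Complex.exp (φ u) - 1‖ ≤ 2 * ‖φ u‖ := Complex.norm_exp_sub_one_le ((hφ u).trans hu2)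
      _ ≤ 2 * c * u ^ 2 := by linarith [hφ u]
  calc μ.real {x | r < |x|} ≤ 8 * (2 * c) / (3 * r ^ 2) :=
        measureReal_abs_gt_le_of_norm_one_sub_charFun_le hr hc
    _ ≤ 2⁻¹ := by rw [div_le_iff₀ (by positivity)]; linarith

section FirstMax

variable {ι : Type*} [LinearOrder ι]

def firstMaxSet (F : Finset ι) (s : ι) : Set (ι → ℝ) :=
  {y | ∀ r ∈ F, y r ≤ y s ∧ (r < s → y r < y s)}

lemma measurableSet_firstMaxSet (F : Finset ι) (s : ι) : MeasurableSet (firstMaxSet F s) := by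
  have : firstMaxSet F s = ⋂ r ∈ F, {y : ι → ℝ | y r ≤ y s ∧ (r < s → y r < y s)} := by
    ext y; simp [firstMaxSet]
  rw [this]
  refine F.measurableSet_biInter fun r _ => ?_
  exact (measurableSet_le (measurable_pi_apply r) (measurable_pi_apply s)).inter
    ((MeasurableSet.const _).imp (measurableSet_lt (measurable_pi_apply r) (measurable_pi_apply s)))

lemma exists_mem_firstMaxSet {F : Finset ι} (hF : F.Nonempty) (y : ι → ℝ) :
    ∃ s ∈ F, y ∈ firstMaxSet F s := by
  classical
  set argmax := F.filter fun r => ∀ r' ∈ F, y r' ≤ y r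
  have hne : argmax.Nonempty := by
    obtain ⟨r, hr, hmax⟩ := F.exists_max_image y hF
    exact ⟨r, Finset.mem_filter.mpr ⟨hr, hmax⟩⟩
  obtain ⟨hs, hmax⟩ := Finset.mem_filter.mp (argmax.min'_mem hne)
  refine ⟨_, hs, fun r hr => ⟨hmax r hr, fun hlt => lt_of_not_ge fun hle => ?_⟩⟩
  have : r ∈ argmax := Finset.mem_filter.mpr ⟨hr, fun r' hr' => (hmax r' hr').trans hle⟩
  exact (argmax.min'_le r this).not_gt hlt

lemma eq_of_mem_firstMaxSet {F : Finset ι} {s s' : ι} {y : ι → ℝ} (hs : s ∈ F) (hs' : s' ∈ F)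
    (hy : y ∈ firstMaxSet F s) (hy' : y ∈ firstMaxSet F s') : s = s' := by
  rcases lt_trichotomy s s' with hlt | heq | hgt
  · exact absurd (hy' s hs).2 fun h => (h hlt).not_ge (hy s' hs').1
  · exact heq
  · exact absurd (hy s' hs').2 fun h => (h hgt).not_ge (hy' s hs).1

lemma sum_indicator_firstMaxSet {G : ℝ → ℝ≥0∞} (hG : Monotone G) (F : Finset ι) (y : ι → ℝ) :
    ∑ s ∈ F, (firstMaxSet F s).indicator (fun y => G (y s)) y = ⨆ s ∈ F, G (y s) := by
  rcases F.eq_empty_or_nonempty with rfl | hF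
  · simp
  obtain ⟨s₀, hs₀, hy⟩ := exists_mem_firstMaxSet hF y
  rw [Finset.sum_eq_single_of_mem s₀ hs₀ fun s hs hne =>
    Set.indicator_of_notMem (fun h => hne (eq_of_mem_firstMaxSet hs hs₀ h hy)) _,
    Set.indicator_of_mem hy]
  exact le_antisymm (le_iSup₂ (f := fun s _ => G (y s)) s₀ hs₀)
    (iSup₂_le fun s hs => hG (hy s hs).1)

end FirstMax

section MaximalInequality

variable {Ω ι : Type*} [MeasurableSpace Ω] [LinearOrder ι] {P : Measure Ω} {Y R : Ω → ι → ℝ}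
  {Z : Ω → ℝ} {G : ℝ → ℝ≥0∞} {K : ℝ} {q : ℝ≥0∞}

/-- Split according to the first time `s` at which `Y` reaches its maximum over `F`: this event
depends on `Y` only, hence is independent of `{-K ≤ R s}`, on which `Y s ≤ Z + K`. -/
theorem mul_lintegral_biSup_le_of_indepFun (F : Finset ι) (hY : Measurable Y)
    (hR : Measurable R) (hYR : IndepFun Y R P) (hG : Monotone G) (hGm : Measurable G)
    (hq : ∀ s ∈ F, q ≤ P {ω | -K ≤ R ω s})
    (hZ : ∀ᵐ ω ∂P, ∀ s ∈ F, Y ω s + R ω s ≤ Z ω) :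
    q * ∫⁻ ω, ⨆ s ∈ F, G (Y ω s) ∂P ≤ ∫⁻ ω, G (Z ω + K) ∂P := by
  set φ : ι → (ι → ℝ) → ℝ≥0∞ := fun s => (firstMaxSet F s).indicator fun y => G (y s)
  set B : ι → Set (ι → ℝ) := fun s => {y | -K ≤ y s}
  have hφ (s : ι) : Measurable (φ s) :=
    (hGm.comp (measurable_pi_apply s)).indicator (measurableSet_firstMaxSet F s)
  have hB (s : ι) : MeasurableSet (B s) := measurableSet_le measurable_const (measurable_pi_apply s)
  have hprod (s : ι) : Measurable fun ω => φ s (Y ω) * (B s).indicator 1 (R ω) :=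
    ((hφ s).comp hY).mul ((measurable_one.indicator (hB s)).comp hR)
  have hpointwise (ω : Ω) (hω : ∀ s ∈ F, Y ω s + R ω s ≤ Z ω) :
      ∑ s ∈ F, φ s (Y ω) * (B s).indicator 1 (R ω) ≤ G (Z ω + K) := by
    calc ∑ s ∈ F, φ s (Y ω) * (B s).indicator 1 (R ω)
        ≤ ∑ s ∈ F, (firstMaxSet F s).indicator (fun _ => G (Z ω + K)) (Y ω) := by
          refine Finset.sum_le_sum fun s hs => ?_
          by_cases hA : Y ω ∈ firstMaxSet F s
          · by_cases hBs : R ω ∈ B s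
            · simp only [φ, Set.indicator_of_mem hA, Set.indicator_of_mem hBs, Pi.one_apply,
                mul_one]
              exact hG (by linarith [hω s hs, show -K ≤ R ω s from hBs])
            · simp [Set.indicator_of_notMem hBs]
          · simp [φ, Set.indicator_of_notMem hA]
      _ = ⨆ s ∈ F, G (Z ω + K) := sum_indicator_firstMaxSet monotone_const F (Y ω)
      _ ≤ G (Z ω + K) := iSup₂_le fun _ _ => le_rfl
  have hsplit : ∫⁻ ω, ⨆ s ∈ F, G (Y ω s) ∂P = ∑ s ∈ F, ∫⁻ ω, φ s (Y ω) ∂P := by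
    simp_rw [← sum_indicator_firstMaxSet hG F]
    exact lintegral_finsetSum _ fun s _ => (hφ s).comp hY
  calc q * ∫⁻ ω, ⨆ s ∈ F, G (Y ω s) ∂P
      = ∑ s ∈ F, q * ∫⁻ ω, φ s (Y ω) ∂P := by rw [hsplit, Finset.mul_sum]
    _ ≤ ∑ s ∈ F, (∫⁻ ω, φ s (Y ω) ∂P) * ∫⁻ ω, (B s).indicator 1 (R ω) ∂P := by
        refine Finset.sum_le_sum fun s hs => ?_
        rw [mul_comm]
        gcongr
        exact (hq s hs).trans_eq (lintegral_indicator_one (hR (hB s))).symm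
    _ = ∑ s ∈ F, ∫⁻ ω, φ s (Y ω) * (B s).indicator 1 (R ω) ∂P := by
        refine Finset.sum_congr rfl fun s _ => ?_
        exact (lintegral_mul_eq_lintegral_mul_lintegral_of_indepFun ((hφ s).comp hY)
          ((measurable_one.indicator (hB s)).comp hR)
          (hYR.comp (hφ s) (measurable_one.indicator (hB s)))).symm
    _ = ∫⁻ ω, ∑ s ∈ F, φ s (Y ω) * (B s).indicator 1 (R ω) ∂P :=
        (lintegral_finsetSum _ fun s _ => hprod s).symm
    _ ≤ ∫⁻ ω, G (Z ω + K) ∂P := lintegral_mono_ae (hZ.mono hpointwise)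

theorem mul_lintegral_iSup_le_of_indepFun [Countable ι] (hY : Measurable Y)
    (hR : Measurable R) (hYR : IndepFun Y R P) (hG : Monotone G) (hGm : Measurable G)
    (hq : ∀ s, q ≤ P {ω | -K ≤ R ω s}) (hZ : ∀ᵐ ω ∂P, ∀ s, Y ω s + R ω s ≤ Z ω) :
    q * ∫⁻ ω, ⨆ s, G (Y ω s) ∂P ≤ ∫⁻ ω, G (Z ω + K) ∂P := by
  rw [show (fun ω => ⨆ s, G (Y ω s)) = fun ω => ⨆ F : Finset ι, ⨆ s ∈ F, G (Y ω s) from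
    funext fun ω => iSup_eq_iSup_finset _]
  have hmono : Monotone fun (F : Finset ι) ω => ⨆ s ∈ F, G (Y ω s) :=
    fun F F' hFF' ω => biSup_mono fun s hs => hFF' hs
  have hmeas (F : Finset ι) : Measurable fun ω => ⨆ s ∈ F, G (Y ω s) :=
    Measurable.biSup _ F.countable_toSet fun s _ => hGm.comp ((measurable_pi_apply s).comp hY)
  rw [lintegral_iSup_directed (fun F => (hmeas F).aemeasurable) hmono.directed_le,
    ENNReal.mul_iSup]
  exact iSup_le fun F => mul_lintegral_biSup_le_of_indepFun F hY hR hYR hG hGm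
    (fun s _ => hq s) (hZ.mono fun ω hω s _ => hω s)

end MaximalInequality

lemma bddAbove_image_Icc_of_rightCont_of_leftLim {f : ℝ → ℝ} {a b : ℝ}
    (hr : ∀ s ∈ Set.Icc a b, ContinuousWithinAt f (Set.Ici s) s)
    (hl : ∀ s ∈ Set.Ioc a b, ∃ l, Tendsto f (𝓝[<] s) (𝓝 l)) :
    BddAbove (f '' Set.Icc a b) := by
  refine isCompact_Icc.induction_on (p := fun u => BddAbove (f '' u)) (by simp)
    (fun u v huv h => h.mono (Set.image_mono huv))
    (fun u v hu hv => by rw [Set.image_union]; exact hu.union hv) fun s hs => ?_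
  suffices ∃ C, ∀ᶠ x in 𝓝[Set.Icc a b] s, f x ≤ C by
    obtain ⟨C, hC⟩ := this
    exact ⟨_, hC, C, Set.forall_mem_image.mpr fun x hx => hx⟩
  have hright : ∀ᶠ x in 𝓝[≥] s, f x ≤ f s + 1 :=
    Filter.Tendsto.eventually_le_const (lt_add_one _) (hr s hs)
  rcases hs.1.eq_or_lt with rfl | has
  · exact ⟨_, nhdsWithin_mono _ (fun x hx => hx.1) hright⟩
  · obtain ⟨l, hl⟩ := hl s ⟨has, hs.2⟩
    have hleft : ∀ᶠ x in 𝓝[<] s, f x ≤ l + 1 := hl.eventually_le_const (lt_add_one _)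
    refine ⟨max (f s + 1) (l + 1), nhdsWithin_le_nhds ?_⟩
    rw [← nhdsLT_sup_nhdsGE]
    exact eventually_sup.mpr ⟨hleft.mono fun x hx => le_max_of_le_right hx,
      hright.mono fun x hx => le_max_of_le_left hx⟩

lemma IsLevyProcess.ae_bddAbove_image_Icc {Ω : Type*} [MeasurableSpace Ω] {P : Measure Ω}
    {X : ℝ → Ω → ℝ} (hX : IsLevyProcess P X) (t : ℝ) :
    ∀ᵐ ω ∂P, BddAbove ((fun s => X s ω) '' Set.Icc 0 t) := by
  filter_upwards [hX.rightCont, hX.leftLim] with ω hr hl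
  exact bddAbove_image_Icc_of_rightCont_of_leftLim (fun s hs => hr s hs.1) fun s hs => hl s hs.1

lemma biSup_Icc_eq_biSup_Icc_inter_rat {α : Type*} [CompleteLinearOrder α] [TopologicalSpace α]
    [OrderTopology α] {g : ℝ → α} {a b : ℝ}
    (hg : ∀ s ∈ Set.Ico a b, ContinuousWithinAt g (Set.Ici s) s) :
    ⨆ s ∈ Set.Icc a b, g s = ⨆ s ∈ Set.Icc a b ∩ insert b (Set.range ((↑) : ℚ → ℝ)), g s := by
  refine le_antisymm (iSup₂_le fun s hs => ?_) (biSup_mono fun s hs => hs.1)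
  rcases hs.2.eq_or_lt with rfl | hsb
  · exact le_iSup₂ (f := fun s _ => g s) s ⟨hs, Set.mem_insert _ _⟩
  have hdense : Set.Ioo s b ⊆ closure (Set.Ioo s b ∩ Set.range ((↑) : ℚ → ℝ)) :=
    Rat.denseRange_cast.open_subset_closure_inter isOpen_Ioo
  have hs_mem : s ∈ closure (Set.Ioo s b ∩ Set.range ((↑) : ℚ → ℝ)) := by
    refine closure_minimal hdense isClosed_closure ?_
    rw [closure_Ioo hsb.ne]
    exact Set.left_mem_Icc.mpr hsb.le
  refine ContinuousWithinAt.closure_le hs_mem ((hg s ⟨hs.1, hsb⟩).mono fun x hx => hx.1.1.le)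
    continuousWithinAt_const fun x hx => ?_
  exact le_iSup₂ (f := fun s _ => g s) x
    ⟨⟨hs.1.trans hx.1.1.le, hx.1.2.le⟩, Set.mem_insert_of_mem _ hx.2⟩

section ExpRunSup

variable {Ω : Type*} {p : ℝ}

lemma monotone_ofReal_exp_mul (hp : 0 ≤ p) :
    Monotone fun x : ℝ => ENNReal.ofReal (Real.exp (p * x)) :=
  fun _ _ hxy => ENNReal.ofReal_le_ofReal (Real.exp_le_exp.mpr (mul_le_mul_of_nonneg_left hxy hp))

lemma continuous_ofReal_exp_mul : Continuous fun x : ℝ => ENNReal.ofReal (Real.exp (p * x)) :=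
  ENNReal.continuous_ofReal.comp (Real.continuous_exp.comp (continuous_const_mul p))

lemma ofReal_exp_mul_runSup {X : ℝ → Ω → ℝ} {t : ℝ} {ω : Ω} (ht : 0 ≤ t) (hp : 0 ≤ p)
    (hbdd : BddAbove ((fun s => X s ω) '' Set.Icc 0 t)) :
    ENNReal.ofReal (Real.exp (p * runSup X t ω)) =
      ⨆ s ∈ Set.Icc 0 t, ENNReal.ofReal (Real.exp (p * X s ω)) := by
  have : Nonempty (Set.Icc 0 t) := ⟨⟨0, Set.left_mem_Icc.mpr ht⟩⟩
  rw [Set.image_eq_range] at hbdd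
  rw [runSup, Monotone.map_ciSup_of_continuousAt continuous_ofReal_exp_mul.continuousAt
    (monotone_ofReal_exp_mul hp) hbdd, iSup_subtype']

theorem mul_lintegral_exp_runSup_le_of_indepFun [MeasurableSpace Ω] {P : Measure Ω}
    {X Y : ℝ → Ω → ℝ} {t K : ℝ} {q : ℝ≥0∞} (ht : 0 ≤ t) (hp : 0 ≤ p) (hX : ∀ s, Measurable (X s))
    (hY : ∀ s, Measurable (Y s))
    (hXbdd : ∀ᵐ ω ∂P, BddAbove ((fun s => X s ω) '' Set.Icc 0 t))
    (hYbdd : ∀ᵐ ω ∂P, BddAbove ((fun s => Y s ω) '' Set.Icc 0 t))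
    (hYrc : ∀ᵐ ω ∂P, ∀ s, 0 ≤ s → ContinuousWithinAt (fun s => Y s ω) (Set.Ici s) s)
    (hindep : IndepFun (fun ω s => Y s ω) (fun ω s => X s ω - Y s ω) P)
    (hq : ∀ s ∈ Set.Icc 0 t, q ≤ P {ω | -K ≤ X s ω - Y s ω}) :
    q * ∫⁻ ω, ENNReal.ofReal (Real.exp (p * runSup Y t ω)) ∂P ≤
      ENNReal.ofReal (Real.exp (p * K)) *
        ∫⁻ ω, ENNReal.ofReal (Real.exp (p * runSup X t ω)) ∂P := by
  set D := Set.Icc 0 t ∩ insert t (Set.range ((↑) : ℚ → ℝ))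
  have : Countable D :=
    (((Set.countable_range _).insert t).mono Set.inter_subset_right).to_subtype
  set G : ℝ → ℝ≥0∞ := fun x => ENNReal.ofReal (Real.exp (p * x))
  have hrestrict : Measurable fun (f : ℝ → ℝ) (s : D) => f s :=
    measurable_pi_lambda _ fun s => measurable_pi_apply _
  have hsup : ∀ᵐ ω ∂P, G (runSup Y t ω) = ⨆ s : D, G (Y s ω) := by
    filter_upwards [hYbdd, hYrc] with ω hbdd hrc
    simp only [G]
    rw [ofReal_exp_mul_runSup ht hp hbdd, biSup_Icc_eq_biSup_Icc_inter_rat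
      (g := fun s => ENNReal.ofReal (Real.exp (p * Y s ω))) fun s hs =>
      continuous_ofReal_exp_mul.continuousAt.comp_continuousWithinAt (hrc s hs.1), iSup_subtype']
  have hZ : ∀ᵐ ω ∂P, ∀ s : D, Y s ω + (X s ω - Y s ω) ≤ runSup X t ω := by
    filter_upwards [hXbdd] with ω hbdd s
    rw [Set.image_eq_range] at hbdd
    rw [add_sub_cancel]
    exact le_ciSup hbdd ⟨s, s.2.1⟩
  calc q * ∫⁻ ω, G (runSup Y t ω) ∂P = q * ∫⁻ ω, ⨆ s : D, G (Y s ω) ∂P := by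
        rw [lintegral_congr_ae hsup]
    _ ≤ ∫⁻ ω, G (runSup X t ω + K) ∂P :=
        mul_lintegral_iSup_le_of_indepFun (Y := fun ω (s : D) => Y s ω)
          (R := fun ω (s : D) => X s ω - Y s ω) (measurable_pi_lambda _ fun s => hY s)
          (measurable_pi_lambda _ fun s => (hX s).sub (hY s)) (hindep.comp hrestrict hrestrict)
          (monotone_ofReal_exp_mul hp) continuous_ofReal_exp_mul.measurable
          (fun s => hq s s.2.1) hZ
    _ = ENNReal.ofReal (Real.exp (p * K)) * ∫⁻ ω, G (runSup X t ω) ∂P := by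
        rw [← lintegral_const_mul' _ _ ENNReal.ofReal_ne_top]
        congr with ω
        simp only [G]
        rw [← ENNReal.ofReal_mul (Real.exp_pos _).le, ← Real.exp_add, mul_add, add_comm]

end ExpRunSup

section Concentration

variable {Ω : Type*} [MeasurableSpace Ω] {P : Measure Ω} {Z : Ω → ℝ}

lemma charFun_map_eq_integral (hZ : Measurable Z) (u : ℝ) :
    charFun (P.map Z) u = ∫ ω, Complex.exp (Complex.I * ((u * Z ω : ℝ) : ℂ)) ∂P := by
  rw [charFun_apply_real, integral_map hZ.aemeasurable (by fun_prop)]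
  congr with ω
  push_cast
  ring_nf

lemma inv_two_le_measure_neg_le_of_integral_cexp_eq [IsProbabilityMeasure P] (hZ : Measurable Z)
    {φ : ℝ → ℂ} {c K : ℝ} (hK : 0 < K) (hcK : 32 * c ≤ 3 * K ^ 2)
    (hchar : ∀ u, ∫ ω, Complex.exp (Complex.I * ((u * Z ω : ℝ) : ℂ)) ∂P = Complex.exp (φ u))
    (hφ : ∀ u, ‖φ u‖ ≤ c * u ^ 2) :
    2⁻¹ ≤ P {ω | -K ≤ Z ω} := by
  have : IsProbabilityMeasure (P.map Z) := Measure.isProbabilityMeasure_map hZ.aemeasurable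
  have htail : (P.map Z).real {x | K < |x|} ≤ 2⁻¹ :=
    measureReal_abs_gt_le_half_of_charFun_eq_cexp hK hcK
      (fun u => (charFun_map_eq_integral hZ u).trans (hchar u)) hφ
  have hlow : P {ω | Z ω < -K} ≤ 2⁻¹ :=
    calc P {ω | Z ω < -K} ≤ P.map Z {x | K < |x|} := by
          rw [Measure.map_apply hZ (measurableSet_lt measurable_const measurable_abs)]
          exact measure_mono fun ω (hω : Z ω < -K) =>
            show K < |Z ω| from lt_abs.mpr (Or.inr (by linarith))
      _ ≤ ENNReal.ofReal 2⁻¹ :=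
          (ENNReal.le_ofReal_iff_toReal_le (measure_ne_top _ _) (by norm_num)).mpr htail
      _ = 2⁻¹ := by rw [ENNReal.ofReal_inv_of_pos two_pos, ENNReal.ofReal_ofNat]
  have hcompl : {ω | -K ≤ Z ω} = {ω | Z ω < -K}ᶜ := by
    ext ω
    simp [not_lt]
  rw [hcompl, prob_compl_eq_one_sub (measurableSet_lt hZ measurable_const),
    ← ENNReal.one_sub_inv_two]
  exact tsub_le_tsub_left hlow 1

end Concentration

theorem exp_sup_uniform_bound_general
    {Ω : Type*} [MeasurableSpace Ω] (P : Measure Ω) [IsProbabilityMeasure P]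
    (ν : Measure ℝ) (hν : IsLevyMeasure ν)
    (X : ℝ → Ω → ℝ) (Xe : ℝ → ℝ → Ω → ℝ)
    (hX : IsLevyProcess P X)
    (hXe : ∀ ε ∈ Set.Ioc (0:ℝ) 1, IsLevyProcess P (Xe ε))
    (hRchar : ∀ ε ∈ Set.Ioc (0:ℝ) 1,
      HasCharExponent P (fun s ω => X s ω - Xe ε s ω) (smallExponent ν ε))
    (hIndep : ∀ ε ∈ Set.Ioc (0:ℝ) 1,
      IndepFun (fun ω => fun s : ℝ => Xe ε s ω) (fun ω => fun s : ℝ => X s ω - Xe ε s ω) P)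
    (t : ℝ) (ht : 0 ≤ t) (p : ℝ) (hp : 0 < p)
    (hexp : Integrable (fun ω => Real.exp (p * runSup X t ω)) P) :
    (⨆ δ ∈ Set.Ioc (0:ℝ) 1,
      ∫⁻ ω, ENNReal.ofReal (Real.exp (p * runSup (Xe δ) t ω)) ∂P) < ⊤ := by
  set V := ∫ x in {x : ℝ | |x| ≤ 1}, x ^ 2 ∂ν
  have hV : 0 ≤ V :=
    setIntegral_nonneg (measurableSet_le measurable_abs measurable_const) fun x _ => sq_nonneg x
  -- any `K > 0` with `32 (2 t V) ≤ 3 K²` makes the truncation inequality give `1/2`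
  set K := 4 * (2 * t * V + 1)
  have hsmall : ∀ δ ∈ Set.Ioc (0:ℝ) 1, ∀ s ∈ Set.Icc 0 t,
      2⁻¹ ≤ P {ω | -K ≤ X s ω - Xe δ s ω} := by
    intro δ hδ s hs
    refine inv_two_le_measure_neg_le_of_integral_cexp_eq ((hX.meas s).sub ((hXe δ hδ).meas s))
      (c := 2 * t * V) (by positivity) (by nlinarith) (hRchar δ hδ s hs.1) fun u => ?_
    rw [norm_mul, Complex.norm_real, Real.norm_of_nonneg hs.1]
    calc s * ‖smallExponent ν δ u‖ ≤ t * (2 * V * u ^ 2) :=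
          mul_le_mul hs.2 (norm_smallExponent_le hν hδ.2 u) (norm_nonneg _) ht
      _ = 2 * t * V * u ^ 2 := by ring
  have hbound : ∀ δ ∈ Set.Ioc (0:ℝ) 1,
      ∫⁻ ω, ENNReal.ofReal (Real.exp (p * runSup (Xe δ) t ω)) ∂P ≤
        2 * (ENNReal.ofReal (Real.exp (p * K)) *
          ∫⁻ ω, ENNReal.ofReal (Real.exp (p * runSup X t ω)) ∂P) := by
    intro δ hδ
    rw [← ENNReal.inv_mul_le_iff two_ne_zero ENNReal.ofNat_ne_top]
    exact mul_lintegral_exp_runSup_le_of_indepFun ht hp.le hX.meas (hXe δ hδ).meas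
      (hX.ae_bddAbove_image_Icc t) ((hXe δ hδ).ae_bddAbove_image_Icc t) (hXe δ hδ).rightCont
      (hIndep δ hδ) (hsmall δ hδ)
  refine (iSup₂_le hbound).trans_lt ?_
  exact ENNReal.mul_lt_top ENNReal.ofNat_lt_top
    (ENNReal.mul_lt_top ENNReal.ofReal_lt_top hexp.lintegral_lt_top)

/-- Lemma 1: if `E e^{pM_t} < ∞` then `sup_{0<δ≤1} E e^{pM^δ_t} < ∞`. -/
theorem exp_sup_uniform_bound
    {Ω : Type*} [MeasurableSpace Ω] (P : Measure Ω) [IsProbabilityMeasure P]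
    (γ b : ℝ) (hb0 : 0 ≤ b) (ν : Measure ℝ) (hν : IsLevyMeasure ν)
    (X : ℝ → Ω → ℝ) (Xe : ℝ → ℝ → Ω → ℝ)
    (hX : IsLevyProcess P X)
    (hXchar : HasCharExponent P X (levyExponent γ b ν))
    (hXe : ∀ ε ∈ Set.Ioc (0:ℝ) 1, IsLevyProcess P (Xe ε))
    (hXechar : ∀ ε ∈ Set.Ioc (0:ℝ) 1, HasCharExponent P (Xe ε) (truncExponent γ b ν ε))
    (hRchar : ∀ ε ∈ Set.Ioc (0:ℝ) 1,
      HasCharExponent P (fun s ω => X s ω - Xe ε s ω) (smallExponent ν ε))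
    (hIndep : ∀ ε ∈ Set.Ioc (0:ℝ) 1,
      IndepFun (fun ω => fun s : ℝ => Xe ε s ω) (fun ω => fun s : ℝ => X s ω - Xe ε s ω) P)
    (t : ℝ) (ht : 0 ≤ t) (p : ℝ) (hp : 0 < p)
    (hexp : Integrable (fun ω => Real.exp (p * runSup X t ω)) P) :
    (⨆ δ ∈ Set.Ioc (0:ℝ) 1,
      ∫⁻ ω, ENNReal.ofReal (Real.exp (p * runSup (Xe δ) t ω)) ∂P) < ⊤ :=
  exp_sup_uniform_bound_general P ν hν X Xe hX hXe hRchar hIndep t ht p hp hexp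

end LevyApprox
end
end

section
/- Let X and Y be two real random variables on the same probability space. Assume that X has a probability density function which is bounded on some neighbourhood of a point x ∈ ℝ, and that there exists p > 0 such that E|X − Y|^p < ∞. Then there exists a constant K_x > 0 such that for every δ > 0, |P[X ≥ x] − P[Y ≥ x]| ≤ K_x δ + E|X − Y|^p / δ^p. -/
open MeasureTheory ProbabilityTheory Filter Asymptotics

noncomputable section

namespace LevyApprox

variable {Ω : Type*} [MeasurableSpace Ω]

/-! The events `{x ≤ X}` and `{x ≤ Y}` can differ only where `X` lies within `δ` of `x` or where
`|X - Y| ≥ δ`. The first event has probability `O(δ)`: for small `δ` by the bounded density, for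
large `δ` trivially. The second has probability at most `E|X - Y|^p / δ^p` by Markov's inequality. -/

open Set
open scoped symmDiff

lemma setOf_le_symmDiff_subset {α : Type*} (X Y : α → ℝ) (x δ : ℝ) :
    {ω | x ≤ X ω} ∆ {ω | x ≤ Y ω} ⊆ X ⁻¹' Ico (x - δ) (x + δ) ∪ {ω | δ ≤ |X ω - Y ω|} := by
  rintro ω (⟨hXω, hYω⟩ | ⟨hYω, hXω⟩) <;>
    simp only [mem_ofPred_eq, not_le] at hXω hYω <;>
    simp only [mem_union, mem_preimage, mem_Ico, mem_ofPred_eq, le_abs]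
  · by_cases h : X ω < x + δ
    · exact Or.inl ⟨by linarith, h⟩
    · exact Or.inr (Or.inl (by linarith))
  · by_cases h : x - δ ≤ X ω
    · exact Or.inl ⟨h, by linarith⟩
    · exact Or.inr (Or.inr (by linarith))

lemma abs_measureReal_setOf_le_sub_le (μ : Measure Ω) [IsFiniteMeasure μ] {X Y : Ω → ℝ}
    (hX : Measurable X) (hY : Measurable Y) (x δ : ℝ) :
    |μ.real {ω | x ≤ X ω} - μ.real {ω | x ≤ Y ω}|
      ≤ μ.real (X ⁻¹' Ico (x - δ) (x + δ)) + μ.real {ω | δ ≤ |X ω - Y ω|} :=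
  calc |μ.real {ω | x ≤ X ω} - μ.real {ω | x ≤ Y ω}|
      ≤ μ.real ({ω | x ≤ X ω} ∆ {ω | x ≤ Y ω}) :=
        abs_measureReal_sub_le_measureReal_symmDiff
          (hX measurableSet_Ici).nullMeasurableSet (hY measurableSet_Ici).nullMeasurableSet
    _ ≤ μ.real (X ⁻¹' Ico (x - δ) (x + δ) ∪ {ω | δ ≤ |X ω - Y ω|}) :=
        measureReal_mono (setOf_le_symmDiff_subset X Y x δ)
    _ ≤ _ := measureReal_union_le _ _

lemma measureReal_preimage_le_of_density_le {β : Type*} [MeasurableSpace β] {P : Measure Ω}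
    {X : Ω → β} (hX : AEMeasurable X P) {ν : Measure β} {f : β → ℝ}
    (hfd : P.map X = ν.withDensity (fun y => ENNReal.ofReal (f y)))
    {S : Set β} (hS : MeasurableSet S) (hνS : ν S ≠ ⊤) {C : ℝ} (hC0 : 0 ≤ C)
    (hC : ∀ y ∈ S, f y ≤ C) :
    P.real (X ⁻¹' S) ≤ C * ν.real S := by
  have hle : P.map X S ≤ ENNReal.ofReal C * ν S := by
    rw [hfd, withDensity_apply _ hS, ← setLIntegral_const]
    exact setLIntegral_mono measurable_const fun y hy => ENNReal.ofReal_le_ofReal (hC y hy)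
  rw [Measure.map_apply_of_aemeasurable hX hS] at hle
  simpa [measureReal_def, ENNReal.toReal_mul, ENNReal.toReal_ofReal hC0] using
    ENNReal.toReal_mono (by finiteness) hle

lemma exists_pos_measureReal_preimage_Ico_le_mul {P : Measure Ω} [IsProbabilityMeasure P]
    {X : Ω → ℝ} (hX : AEMeasurable X P) {f : ℝ → ℝ}
    (hfd : P.map X = volume.withDensity (fun y => ENNReal.ofReal (f y))) {x : ℝ}
    (hbd : ∃ s ∈ nhds x, ∃ C : ℝ, ∀ y ∈ s, f y ≤ C) :
    ∃ K : ℝ, 0 < K ∧ ∀ δ : ℝ, 0 < δ → P.real (X ⁻¹' Ico (x - δ) (x + δ)) ≤ K * δ := by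
  obtain ⟨s, hs, C, hC⟩ := hbd
  obtain ⟨r, hr, hrs⟩ := Metric.nhds_basis_closedBall.mem_iff.mp hs
  refine ⟨max (2 * max C 0) r⁻¹, lt_max_of_lt_right (inv_pos.mpr hr), fun δ hδ => ?_⟩
  rcases le_or_gt δ r with hδr | hrδ
  · have hIco : Ico (x - δ) (x + δ) ⊆ s := fun y hy =>
      hrs <| Real.closedBall_eq_Icc ▸ ⟨by linarith [hy.1], by linarith [hy.2]⟩
    calc P.real (X ⁻¹' Ico (x - δ) (x + δ)) ≤ max C 0 * volume.real (Ico (x - δ) (x + δ)) :=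
          measureReal_preimage_le_of_density_le hX hfd measurableSet_Ico (by simp)
            (le_max_right C 0) fun y hy => (hC y (hIco hy)).trans (le_max_left C 0)
      _ = 2 * max C 0 * δ := by rw [Real.volume_real_Ico_of_le (by linarith)]; ring
      _ ≤ _ := by gcongr; exact le_max_left _ _
  · calc P.real (X ⁻¹' Ico (x - δ) (x + δ)) ≤ 1 := measureReal_le_one
      _ = r⁻¹ * r := (inv_mul_cancel₀ hr.ne').symm
      _ ≤ _ := by gcongr; exact le_max_right _ _

lemma measureReal_setOf_le_abs_le_integral_rpow_div {μ : Measure Ω} {Z : Ω → ℝ} (hZ : AEMeasurable Z μ)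
    {p : ℝ} (hp : 0 < p) (hmom : ∫⁻ ω, ENNReal.ofReal (|Z ω| ^ p) ∂μ < ⊤) {δ : ℝ} (hδ : 0 < δ) :
    μ.real {ω | δ ≤ |Z ω|} ≤ (∫ ω, |Z ω| ^ p ∂μ) / δ ^ p := by
  have hnonneg : 0 ≤ᵐ[μ] fun ω => |Z ω| ^ p := .of_forall fun ω => by positivity
  have hint : Integrable (fun ω => |Z ω| ^ p) μ :=
    (lintegral_ofReal_ne_top_iff_integrable (hZ.abs.pow_const p).aestronglyMeasurable
      hnonneg).mp hmom.ne
  have hset : {ω | δ ≤ |Z ω|} = {ω | δ ^ p ≤ |Z ω| ^ p} := by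
    ext ω
    exact (Real.rpow_le_rpow_iff hδ.le (abs_nonneg _) hp).symm
  rw [hset, le_div_iff₀ (Real.rpow_pos_of_pos hδ p), mul_comm]
  exact mul_meas_ge_le_integral_of_nonneg hnonneg hint _

theorem cdf_difference_bound_general
    {Ω : Type*} [MeasurableSpace Ω] (P : Measure Ω) [IsProbabilityMeasure P]
    (X Y : Ω → ℝ) (hX : Measurable X) (hY : Measurable Y)
    (x : ℝ) (f : ℝ → ℝ)
    (hfd : Measure.map X P = MeasureTheory.volume.withDensity (fun y => ENNReal.ofReal (f y)))
    (hbd : ∃ s ∈ nhds x, ∃ C : ℝ, ∀ y ∈ s, f y ≤ C)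
    (p : ℝ) (hp : 0 < p)
    (hmom : ∫⁻ ω, ENNReal.ofReal (|X ω - Y ω| ^ p) ∂P < ⊤) :
    ∃ K : ℝ, 0 < K ∧ ∀ δ : ℝ, 0 < δ →
      |(P {ω | x ≤ X ω}).toReal - (P {ω | x ≤ Y ω}).toReal|
        ≤ K * δ + (∫ ω, |X ω - Y ω| ^ p ∂P) / δ ^ p := by
  obtain ⟨K, hK, hwindow⟩ := exists_pos_measureReal_preimage_Ico_le_mul hX.aemeasurable hfd hbd
  refine ⟨K, hK, fun δ hδ => ?_⟩
  calc |P.real {ω | x ≤ X ω} - P.real {ω | x ≤ Y ω}|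
      ≤ P.real (X ⁻¹' Ico (x - δ) (x + δ)) + P.real {ω | δ ≤ |X ω - Y ω|} :=
        abs_measureReal_setOf_le_sub_le P hX hY x δ
    _ ≤ K * δ + (∫ ω, |X ω - Y ω| ^ p ∂P) / δ ^ p :=
        add_le_add (hwindow δ hδ)
          (measureReal_setOf_le_abs_le_integral_rpow_div (hX.sub hY).aemeasurable hp hmom hδ)

/-- Lemma 2: comparison of the cumulative distribution functions of two
random variables, when one of them has a density bounded near `x`. -/
theorem cdf_difference_bound
    {Ω : Type*} [MeasurableSpace Ω] (P : Measure Ω) [IsProbabilityMeasure P]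
    (X Y : Ω → ℝ) (hX : Measurable X) (hY : Measurable Y)
    (x : ℝ) (f : ℝ → ℝ) (hf0 : ∀ y : ℝ, 0 ≤ f y)
    (hfd : Measure.map X P = MeasureTheory.volume.withDensity (fun y => ENNReal.ofReal (f y)))
    (hbd : ∃ s ∈ nhds x, ∃ C : ℝ, ∀ y ∈ s, f y ≤ C)
    (p : ℝ) (hp : 0 < p)
    (hmom : ∫⁻ ω, ENNReal.ofReal (|X ω - Y ω| ^ p) ∂P < ⊤) :
    ∃ K : ℝ, 0 < K ∧ ∀ δ : ℝ, 0 < δ →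
      |(P {ω | x ≤ X ω}).toReal - (P {ω | x ≤ Y ω}).toReal|
        ≤ K * δ + (∫ ω, |X ω - Y ω| ^ p ∂P) / δ ^ p :=
  cdf_difference_bound_general P X Y hX hY x f hfd hbd p hp hmom

end LevyApprox
end
end
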